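/- Let n ∈ ℕ, A a real diagonalizable n×n matrix with real eigenvalues, and α ∈ (0,1]. Then E_α(A·(t+s)^α) = E_α(A·t^α)·E_α(A·s^α) for all t, s ≥ 0 if and only if α = 1 or A = 0. -/

import Mathlib

noncomputable def matrixMittagLeffler {n : ℕ} (α : ℝ) (M : Matrix (Fin n) (Fin n) ℝ) :
    Matrix (Fin n) (Fin n) ℝ :=
  ∑' k : ℕ, (Real.Gamma (α * k + 1))⁻¹ • M ^ k

/-!
Conjugation by `P` and the passage to a diagonal matrix both commute with the series, so for
`A = P * diagonal d * P⁻¹` the semigroup identity holds iff every eigenvalue `λ = d i`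
satisfies `E_α((t+s)^α λ) = E_α(t^α λ) E_α(s^α λ)`. For `α = 1` this is `exp_add`. Otherwise
take `t = s = y^(1/α)`: then `E_α(2^α λ y) = E_α(λ y)^2` for `y ≥ 0`. The scalar `E_α` is entire
with `E_α'(0) = 1/Γ(α+1)`, so comparing right derivatives at `y = 0` gives `2^α λ = 2 λ`,
hence `λ = 0`.
-/

open Real Filter Topology FormalMultilinearSeries
open scoped Nat

namespace Real

lemma factorial_le_Gamma_add_one {j : ℕ} {x : ℝ} (hj : 1 ≤ j) (hjx : (j : ℝ) ≤ x) :
    (j ! : ℝ) ≤ Gamma (x + 1) := by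
  have hj' : (1 : ℝ) ≤ j := by exact_mod_cast hj
  rw [← Gamma_nat_eq_factorial]
  exact Gamma_strictMonoOn_Ici.monotoneOn (by simp; linarith) (by simp; linarith) (by linarith)

lemma tendsto_pow_div_Gamma_mul_add_one {α y : ℝ} (hα : 0 < α) (hy : 0 ≤ y) :
    Tendsto (fun k : ℕ => y ^ k / Gamma (α * k + 1)) atTop (𝓝 0) := by
  set q := ⌈α⁻¹⌉₊
  set X := max 1 y
  have hαq : 1 ≤ α * q := by
    rw [← div_le_iff₀' hα, one_div]; exact Nat.le_ceil _
  have hq : 0 < q := Nat.ceil_pos.2 (inv_pos.2 hα)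
  have hbound : ∀ᶠ k : ℕ in atTop,
      y ^ k / Gamma (α * k + 1) ≤ X ^ q * ((X ^ q) ^ (k / q) / (k / q)!) := by
    filter_upwards [eventually_ge_atTop q] with k hk
    have hnum : y ^ k ≤ X ^ q * (X ^ q) ^ (k / q) := calc
      y ^ k ≤ X ^ k := by gcongr; exact le_max_right _ _
      _ ≤ X ^ (q * (k / q + 1)) :=
        pow_le_pow_right₀ (le_max_left _ _) (Nat.lt_mul_div_succ k hq).le
      _ = X ^ q * (X ^ q) ^ (k / q) := by ring
    have hden : ((k / q : ℕ) : ℝ) ≤ α * k := calc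
      ((k / q : ℕ) : ℝ) ≤ α * q * (k / q : ℕ) := le_mul_of_one_le_left (by positivity) hαq
      _ = α * ((q * (k / q) : ℕ) : ℝ) := by push_cast; ring
      _ ≤ α * k := by gcongr; exact Nat.mul_div_le k q
    rw [mul_div_assoc']
    exact div_le_div₀ (by positivity) hnum (by positivity)
      (factorial_le_Gamma_add_one ((Nat.one_le_div_iff hq).2 hk) hden)
  have hlim : Tendsto (fun k : ℕ => X ^ q * ((X ^ q) ^ (k / q) / (k / q)!)) atTop (𝓝 0) := by
    simpa using ((FloorSemiring.tendsto_pow_div_factorial_atTop (X ^ q)).comp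
      (Nat.tendsto_div_const_atTop hq.ne')).const_mul (X ^ q)
  refine squeeze_zero' (Eventually.of_forall fun k => ?_) hbound hlim
  have : 0 < Gamma (α * k + 1) := Gamma_pos_of_pos (by positivity)
  positivity

end Real

noncomputable def mittagLefflerCoeff (α : ℝ) (k : ℕ) : ℝ := (Gamma (α * k + 1))⁻¹

noncomputable def mittagLeffler (α : ℝ) : ℝ → ℝ := ofScalarsSum (mittagLefflerCoeff α)

lemma radius_ofScalars_mittagLefflerCoeff {α : ℝ} (hα : 0 < α) :
    (ofScalars ℝ (mittagLefflerCoeff α)).radius = ⊤ := by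
  refine ENNReal.eq_top_of_forall_nnreal_le fun r => ?_
  refine (ofScalars ℝ (mittagLefflerCoeff α)).le_radius_of_tendsto (l := 0) ?_
  refine (tendsto_pow_div_Gamma_mul_add_one hα r.coe_nonneg).congr fun k => ?_
  rw [ofScalars_norm, mittagLefflerCoeff, norm_inv,
    Real.norm_of_nonneg (Gamma_nonneg_of_nonneg (by positivity)), div_eq_inv_mul]

lemma hasFPowerSeriesOnBall_mittagLeffler {α : ℝ} (hα : 0 < α) :
    HasFPowerSeriesOnBall (mittagLeffler α) (ofScalars ℝ (mittagLefflerCoeff α)) 0 ⊤ := by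
  have h := (ofScalars ℝ (mittagLefflerCoeff α)).hasFPowerSeriesOnBall
    (by simp [radius_ofScalars_mittagLefflerCoeff hα])
  rwa [radius_ofScalars_mittagLefflerCoeff hα] at h

lemma hasSum_mittagLeffler {α : ℝ} (hα : 0 < α) (z : ℝ) :
    HasSum (fun k => mittagLefflerCoeff α k * z ^ k) (mittagLeffler α z) := by
  simpa [ofScalars_apply_eq, mul_comm] using
    (hasFPowerSeriesOnBall_mittagLeffler hα).hasSum (y := z) (by simp)

lemma mittagLeffler_zero (α : ℝ) : mittagLeffler α 0 = 1 := by
  simp [mittagLeffler, ofScalarsSum_zero, mittagLefflerCoeff]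

lemma hasDerivAt_mittagLeffler_zero {α : ℝ} (hα : 0 < α) :
    HasDerivAt (mittagLeffler α) (Gamma (α + 1))⁻¹ 0 := by
  simpa [ofScalars_apply_eq, mittagLefflerCoeff] using
    (hasFPowerSeriesOnBall_mittagLeffler hα).hasFPowerSeriesAt.hasDerivAt

lemma mittagLeffler_one : mittagLeffler 1 = exp := by
  rw [exp_eq_exp_ℝ, NormedSpace.exp_eq_expSeries_sum ℝ, NormedSpace.expSeries_eq_ofScalars,
    mittagLeffler, ofScalarsSum]
  congr 2
  ext k
  simp [mittagLefflerCoeff, Gamma_nat_eq_factorial]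

lemma hasDerivAt_mittagLeffler_mul_zero {α : ℝ} (hα : 0 < α) (c : ℝ) :
    HasDerivAt (fun y => mittagLeffler α (y * c)) ((Gamma (α + 1))⁻¹ * c) 0 := by
  simpa [Function.comp_def] using
    (hasDerivAt_mittagLeffler_zero hα).comp_of_eq 0 ((hasDerivAt_id 0).mul_const c)
      (zero_mul c).symm

lemma eq_zero_of_mittagLeffler_semigroup {α lam : ℝ} (hα : 0 < α) (hα1 : α ≠ 1)
    (H : ∀ t s : ℝ, 0 ≤ t → 0 ≤ s → mittagLeffler α ((t + s) ^ α * lam)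
      = mittagLeffler α (t ^ α * lam) * mittagLeffler α (s ^ α * lam)) :
    lam = 0 := by
  have hdouble : ∀ y ∈ Set.Ici (0 : ℝ),
      mittagLeffler α (y * (2 ^ α * lam)) = mittagLeffler α (y * lam) ^ 2 := by
    intro y hy
    have ht : 0 ≤ y ^ α⁻¹ := rpow_nonneg hy _
    have h := H _ _ ht ht
    rw [← two_mul, mul_rpow zero_le_two ht, rpow_inv_rpow hy hα.ne'] at h
    rw [sq, ← h, mul_left_comm, mul_assoc]
  have hlhs :=
    (hasDerivAt_mittagLeffler_mul_zero hα (2 ^ α * lam)).hasDerivWithinAt (s := Set.Ici 0)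
  have hrhs := ((hasDerivAt_mittagLeffler_mul_zero hα lam).pow 2).hasDerivWithinAt.congr_of_mem
    hdouble Set.self_mem_Ici
  have heq := (uniqueDiffWithinAt_Ici 0).eq_deriv _ hlhs hrhs
  simp only [zero_mul, mittagLeffler_zero] at heq
  have h2α : (2 : ℝ) ^ α ≠ 2 := by
    simpa using (rpow_right_inj zero_lt_two one_lt_two.ne').not.2 hα1
  have hΓ : (Gamma (α + 1))⁻¹ ≠ 0 := inv_ne_zero (Gamma_pos_of_pos (by linarith)).ne'
  have : ((2 : ℝ) ^ α - 2) * (Gamma (α + 1))⁻¹ * lam = 0 := by linear_combination heq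
  simpa [sub_ne_zero.2 h2α, hΓ] using this

open Matrix

lemma matrixMittagLeffler_conjAct_smul {n : ℕ} (α : ℝ)
    (g : ConjAct (Matrix (Fin n) (Fin n) ℝ)ˣ) (M : Matrix (Fin n) (Fin n) ℝ) :
    matrixMittagLeffler α (g • M) = g • matrixMittagLeffler α M := by
  have hinv : Function.LeftInverse (g⁻¹ • · : Matrix (Fin n) (Fin n) ℝ → _)
      (DistribSMul.toAddMonoidHom _ g) := inv_smul_smul g
  have : g • ∑' k : ℕ, (Gamma (α * k + 1))⁻¹ • M ^ k
      = ∑' k : ℕ, g • ((Gamma (α * k + 1))⁻¹ • M ^ k) :=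
    Function.LeftInverse.map_tsum _ (continuous_const_smul g) (continuous_const_smul g⁻¹) hinv
  simpa [matrixMittagLeffler, smul_pow', smul_comm g] using this.symm

lemma matrixMittagLeffler_diagonal {n : ℕ} {α : ℝ} (hα : 0 < α) (d : Fin n → ℝ) :
    matrixMittagLeffler α (diagonal d) = diagonal (fun i => mittagLeffler α (d i)) := by
  simp_rw [matrixMittagLeffler, diagonal_pow, ← diagonal_smul, ← diagonal_tsum]
  congr 1
  ext i
  have hsum := hasSum_mittagLeffler hα
  rw [tsum_apply (Pi.summable.2 fun i => (hsum (d i)).summable :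
    Summable fun k : ℕ => (Gamma (α * k + 1))⁻¹ • d ^ k)]
  exact (hsum (d i)).tsum_eq

theorem matrix_ml_semigroup_iff_general (n : ℕ) (A : Matrix (Fin n) (Fin n) ℝ)
    (hdiag : ∃ (P : Matrix (Fin n) (Fin n) ℝ) (d : Fin n → ℝ),
      IsUnit P ∧ A = P * Matrix.diagonal d * P⁻¹)
    (α : ℝ) (hα : 0 < α) :
    (∀ t s : ℝ, 0 ≤ t → 0 ≤ s →
        matrixMittagLeffler α ((t + s) ^ α • A)
          = matrixMittagLeffler α (t ^ α • A) * matrixMittagLeffler α (s ^ α • A)) ↔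
      (α = 1 ∨ A = 0) := by
  obtain ⟨_, d, ⟨u, rfl⟩, rfl⟩ := hdiag
  set g := ConjAct.toConjAct u
  have hA : (u : Matrix (Fin n) (Fin n) ℝ) * diagonal d * (u : Matrix (Fin n) (Fin n) ℝ)⁻¹
      = g • diagonal d := by
    simp [g, ConjAct.units_smul_def]
  simp only [hA, smul_comm _ g, matrixMittagLeffler_conjAct_smul, ← smul_mul',
    smul_left_cancel_iff, smul_eq_zero_iff_eq]
  simp only [← diagonal_smul, matrixMittagLeffler_diagonal hα, diagonal_mul_diagonal,
    diagonal_eq_diagonal_iff, diagonal_eq_zero]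
  constructor
  · intro H
    by_cases hα1 : α = 1
    · exact Or.inl hα1
    · exact Or.inr <| funext fun i =>
        eq_zero_of_mittagLeffler_semigroup hα hα1 fun t s ht hs => H t s ht hs i
  · rintro (rfl | rfl) t s - - i
    · simp [mittagLeffler_one, add_mul, exp_add]
    · simp [mittagLeffler_zero]

theorem matrix_ml_semigroup_iff (n : ℕ) (A : Matrix (Fin n) (Fin n) ℝ)
    (hdiag : ∃ (P : Matrix (Fin n) (Fin n) ℝ) (d : Fin n → ℝ),
      IsUnit P ∧ A = P * Matrix.diagonal d * P⁻¹)
    (α : ℝ) (hα : 0 < α) (hα1 : α ≤ 1) :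
    (∀ t s : ℝ, 0 ≤ t → 0 ≤ s →
        matrixMittagLeffler α ((t + s) ^ α • A)
          = matrixMittagLeffler α (t ^ α • A) * matrixMittagLeffler α (s ^ α • A)) ↔
      (α = 1 ∨ A = 0) :=
  matrix_ml_semigroup_iff_general n A hdiag α hα
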